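/- arXiv:0711.3038 — 2 statements merged into one kernel-verified Lean document; each statement's English description precedes it below -/
import Mathlib

section
/- If X is a topological space, x is a tie-point of X witnessed by closed sets A and B (i.e. A ∪ B = X, A ∩ B = {x}, and x is an accumulation point of both A and B), and there is a homeomorphism h : A → B with h(x) = x, then there is a homeomorphism F : X → X with F ∘ F = id and whose set of fixed points is exactly {x}. -/
/-!
Swap the two pieces: the map that is `h` on `A` and `h⁻¹` on `B` is well defined because `h` fixes
the only common point `x`, it is an involution, it is continuous by the pasting lemma for the closed
cover `A ∪ B`, and a fixed point `y ∈ A` satisfies `y = h y ∈ B`, so it is `x`.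
-/

open Set

namespace Homeomorph

variable {X : Type*} [TopologicalSpace X] {A B : Set X} (hcov : A ∪ B = univ) (h : A ≃ₜ B)

open Classical in
noncomputable def piecewiseSymm : X → X := fun y =>
  if hy : y ∈ A then h ⟨y, hy⟩
  else h.symm ⟨y, compl_subset_iff_union.2 hcov hy⟩

variable {hcov h}

theorem piecewiseSymm_of_mem_left {y : X} (hy : y ∈ A) :
    piecewiseSymm hcov h y = h ⟨y, hy⟩ :=
  dif_pos hy

theorem piecewiseSymm_of_mem_right (hfix : ∀ y : A, (y : X) ∈ B → (h y : X) = y)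
    {y : X} (hy : y ∈ B) : piecewiseSymm hcov h y = h.symm ⟨y, hy⟩ := by
  by_cases hyA : y ∈ A
  · have hhy : h ⟨y, hyA⟩ = ⟨y, hy⟩ := Subtype.ext (hfix ⟨y, hyA⟩ hy)
    rw [piecewiseSymm_of_mem_left hyA, ← hhy, symm_apply_apply, hhy]
  · exact dif_neg hyA

theorem piecewiseSymm_involutive (hfix : ∀ y : A, (y : X) ∈ B → (h y : X) = y) :
    Function.Involutive (piecewiseSymm hcov h) := by
  intro y
  by_cases hyA : y ∈ A
  · rw [piecewiseSymm_of_mem_left hyA, piecewiseSymm_of_mem_right hfix (h ⟨y, hyA⟩).2,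
      symm_apply_apply]
  · have hyB : y ∈ B := compl_subset_iff_union.2 hcov hyA
    rw [piecewiseSymm_of_mem_right hfix hyB, piecewiseSymm_of_mem_left (h.symm ⟨y, hyB⟩).2,
      apply_symm_apply]

theorem continuous_piecewiseSymm (hA : IsClosed A) (hB : IsClosed B)
    (hfix : ∀ y : A, (y : X) ∈ B → (h y : X) = y) : Continuous (piecewiseSymm hcov h) := by
  have hcontA : ContinuousOn (piecewiseSymm hcov h) A := by
    refine continuousOn_iff_continuous_domRestrict.2 ?_
    convert continuous_subtype_val.comp h.continuous using 1
    exact funext fun y => piecewiseSymm_of_mem_left y.2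
  have hcontB : ContinuousOn (piecewiseSymm hcov h) B := by
    refine continuousOn_iff_continuous_domRestrict.2 ?_
    convert continuous_subtype_val.comp h.symm.continuous using 1
    exact funext fun y => piecewiseSymm_of_mem_right hfix y.2
  rw [← continuousOn_univ, ← hcov]
  exact hcontA.union_of_isClosed hcontB hA hB

theorem piecewiseSymm_eq_self_iff (hfix : ∀ y : A, (y : X) ∈ B → (h y : X) = y) {y : X} :
    piecewiseSymm hcov h y = y ↔ y ∈ A ∩ B := by
  constructor
  · intro hy
    by_cases hyA : y ∈ A
    · refine ⟨hyA, ?_⟩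
      rw [← hy, piecewiseSymm_of_mem_left hyA]
      exact (h ⟨y, hyA⟩).2
    · have hyB : y ∈ B := compl_subset_iff_union.2 hcov hyA
      refine absurd ?_ hyA
      rw [← hy, piecewiseSymm_of_mem_right hfix hyB]
      exact (h.symm ⟨y, hyB⟩).2
  · rintro ⟨hyA, hyB⟩
    rw [piecewiseSymm_of_mem_left hyA]
    exact hfix ⟨y, hyA⟩ hyB

variable (hcov) in
noncomputable def piecewiseSymmHomeomorph (hA : IsClosed A) (hB : IsClosed B)
    (hfix : ∀ y : A, (y : X) ∈ B → (h y : X) = y) : X ≃ₜ X where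
  toEquiv := (piecewiseSymm_involutive (hcov := hcov) hfix).toPerm
  continuous_toFun := continuous_piecewiseSymm (hcov := hcov) hA hB hfix
  continuous_invFun := continuous_piecewiseSymm (hcov := hcov) hA hB hfix

end Homeomorph

theorem tie_point_symmetric_involution_general {X : Type*} [TopologicalSpace X] (x : X)
    (A B : Set X) (hAc : IsClosed A) (hBc : IsClosed B)
    (hcov : A ∪ B = Set.univ) (hint : A ∩ B = {x})
    (hxA : x ∈ A) (hxB : x ∈ B)
    (h : A ≃ₜ B) (hx : h ⟨x, hxA⟩ = ⟨x, hxB⟩) :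
    ∃ F : X ≃ₜ X, (∀ y, F (F y) = y) ∧ {y | F y = y} = {x} := by
  have hfix : ∀ y : A, (y : X) ∈ B → (h y : X) = y := by
    rintro ⟨y, hyA⟩ hyB
    have hy : y ∈ A ∩ B := ⟨hyA, hyB⟩
    rw [hint, mem_singleton_iff] at hy
    subst hy
    rw [hx]
  refine ⟨Homeomorph.piecewiseSymmHomeomorph hcov hAc hBc hfix,
    Homeomorph.piecewiseSymm_involutive (hcov := hcov) hfix, ?_⟩
  ext y
  exact (Homeomorph.piecewiseSymm_eq_self_iff (hcov := hcov) hfix).trans (by rw [hint])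

/-- A symmetric tie-point gives rise to an involution whose fixed-point set is `{x}`. -/
theorem tie_point_symmetric_involution {X : Type*} [TopologicalSpace X] (x : X)
    (A B : Set X) (hAc : IsClosed A) (hBc : IsClosed B)
    (hcov : A ∪ B = Set.univ) (hint : A ∩ B = {x})
    (haccA : AccPt x (Filter.principal A)) (haccB : AccPt x (Filter.principal B))
    (hxA : x ∈ A) (hxB : x ∈ B)
    (h : A ≃ₜ B) (hx : h ⟨x, hxA⟩ = ⟨x, hxB⟩) :
    ∃ F : X ≃ₜ X, (∀ y, F (F y) = y) ∧ {y | F y = y} = {x} :=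
  tie_point_symmetric_involution_general x A B hAc hBc hcov hint hxA hxB h hx
end

section
/- Let h_λ : Z_λ → ℕ be injective. Suppose (h'_α)_{α<ω₁} is a family of partial injective functions from ℕ to ℕ and (k(α,β))_{α<β<ω₁} are natural numbers such that k(α,β) ∈ dom(h'_α) ∩ dom(h'_β) and h'_α(k(α,β)) ≠ h'_β(k(α,β)) for all α < β, and for each α there exists n_α with h'_α ↾ [n_α, ∞) ⊆ h_λ. Then there do not exist an uncountable J ⊆ ω₁, n ∈ ℕ, and a function h' such that n_α = n and h'_α ↾ n = h' for all α ∈ J. -/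
/-- The counting contradiction concluding Theorem 1: a family of partial injections
with pairwise disagreement witnesses, all of whose tails are contained in a single
injection `h_λ`, admits no uncountable subfamily uniformized on an initial segment. -/
theorem no_uncountable_uniformization {ι : Type*} [LinearOrder ι]
    (Zlam : Set ℕ) (hlam : ℕ → ℕ) (hlaminj : Set.InjOn hlam Zlam)
    (D : ι → Set ℕ) (f : ι → ℕ → ℕ) (hfinj : ∀ α, Set.InjOn (f α) (D α))
    (k : ι → ι → ℕ)
    (hk : ∀ α β, α < β → k α β ∈ D α ∧ k α β ∈ D β ∧ f α (k α β) ≠ f β (k α β))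
    (nn : ι → ℕ)
    (htail : ∀ α, ∀ m, nn α ≤ m → m ∈ D α → m ∈ Zlam ∧ f α m = hlam m) :
    ¬ ∃ (J : Set ι) (n : ℕ) (h' : ℕ → ℕ) (D' : Set ℕ), ¬ J.Countable ∧
      ∀ α ∈ J, nn α = n ∧
        ∀ m < n, (m ∈ D α ↔ m ∈ D') ∧ (m ∈ D α → f α m = h' m) := by
  rintro ⟨J, n, h', D', hJ, huni⟩
  -- J is not countable, hence not subsingleton: get two distinct elements
  have : ¬ J.Subsingleton := fun hs => hJ hs.countable
  rw [Set.not_subsingleton_iff] at this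
  obtain ⟨a, ha, b, hb, hab⟩ := this
  -- wlog a < b
  obtain ⟨α, β, hαβ, hα, hβ⟩ : ∃ α β, α < β ∧ α ∈ J ∧ β ∈ J := by
    rcases hab.lt_or_gt with h | h
    · exact ⟨a, b, h, ha, hb⟩
    · exact ⟨b, a, h, hb, ha⟩
  obtain ⟨hkα, hkβ, hne⟩ := hk α β hαβ
  obtain ⟨hnα, huα⟩ := huni α hα
  obtain ⟨hnβ, huβ⟩ := huni β hβ
  rcases lt_or_ge (k α β) n with hlt | hle
  · exact hne (((huα _ hlt).2 hkα).trans ((huβ _ hlt).2 hkβ).symm)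
  · have h1 := (htail α (k α β) (hnα ▸ hle) hkα).2
    have h2 := (htail β (k α β) (hnβ ▸ hle) hkβ).2
    exact hne (h1.trans h2.symm)
end
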